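/- arXiv:2009.04322 — 2 statements merged into one kernel-verified Lean document; each statement's English description precedes it below -/
import Mathlib

section
/- If A ⊆ F_p is sum-free with density α = |A|/p, and δ₁ = |Â(r₁)|/α is the largest normalized nonzero Fourier coefficient magnitude, then α ≤ δ₁/(1 + δ₁). -/
/-!
With `S(r) = ∑_{a ∈ A} ψ(r a)`, orthogonality of characters gives Parseval,
`∑_r |S(r)|² = p |A|`, and `∑_r S(r)² S(-r) = p · #{(a, b) ∈ A² | a + b ∈ A}`, which vanishes
when `A` is sum-free. Isolating the term `r = 0`, which is `|A|³`, and bounding the others by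
`max_{r ≠ 0} |S(r)| · |S(r)|²` gives `|A|³ ≤ δ₁ |A| (p |A| - |A|²)`, i.e. `α ≤ δ₁ (1 - α)`.
-/

open Finset

/-- The Fourier coefficient of the indicator function of `A` at `r`. -/
noncomputable def ft {p : ℕ} [NeZero p] (A : Finset (ZMod p)) (r : ZMod p) : ℂ :=
  (p : ℂ)⁻¹ * ∑ x : ZMod p,
    if x ∈ A then Complex.exp (-(2 * Real.pi * Complex.I * ((r * x).val : ℕ) / p)) else 0

namespace AddChar

variable {R : Type*} [CommRing R] {ψ : AddChar R ℂ}

def charSum (ψ : AddChar R ℂ) (A : Finset R) (r : R) : ℂ := ∑ a ∈ A, ψ (r * a)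

lemma charSum_mul_charSum (A B : Finset R) (r : R) :
    charSum ψ A r * charSum ψ B r = ∑ x ∈ A ×ˢ B, ψ (r * (x.1 + x.2)) := by
  simp only [charSum, sum_mul_sum, sum_product, mul_add, map_add_eq_mul]

variable [Fintype R]

lemma charSum_neg (A : Finset R) (r : R) :
    charSum ψ A (-r) = starRingEnd ℂ (charSum ψ A r) := by
  simp only [charSum, map_sum, neg_mul, map_neg_eq_conj]

lemma norm_charSum_neg (A : Finset R) (r : R) : ‖charSum ψ A (-r)‖ = ‖charSum ψ A r‖ := by
  rw [charSum_neg, Complex.norm_conj]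

lemma charSum_mul_charSum_neg (A : Finset R) (r : R) :
    charSum ψ A r * charSum ψ A (-r) = (‖charSum ψ A r‖ ^ 2 : ℝ) := by
  rw [charSum_neg, Complex.mul_conj, Complex.normSq_eq_norm_sq]

variable [DecidableEq R]

lemma sum_mul_charSum_neg {ι : Type*} (hψ : ψ.IsPrimitive) (s : Finset ι) (f : ι → R)
    (C : Finset R) :
    ∑ r, (∑ i ∈ s, ψ (r * f i)) * charSum ψ C (-r) = Fintype.card R * #{i ∈ s | f i ∈ C} := by
  calc ∑ r, (∑ i ∈ s, ψ (r * f i)) * charSum ψ C (-r)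
      = ∑ i ∈ s, ∑ c ∈ C, ∑ r, ψ (r * (f i - c)) := by
        simp only [charSum, sum_mul_sum, sub_eq_add_neg, mul_add, mul_neg, neg_mul, map_add_eq_mul]
        rw [sum_comm]
        exact sum_congr rfl fun i _ => sum_comm
    _ = ∑ i ∈ s, ∑ c ∈ C, if f i = c then (Fintype.card R : ℂ) else 0 := by
        simp only [sum_mulShift _ hψ, sub_eq_zero, Nat.cast_ite, Nat.cast_zero]
    _ = Fintype.card R * #{i ∈ s | f i ∈ C} := by
        simp only [sum_ite_eq]
        rw [card_filter, Nat.cast_sum, mul_sum]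
        refine sum_congr rfl fun i _ => ?_
        split_ifs <;> simp

lemma sum_norm_charSum_sq (hψ : ψ.IsPrimitive) (A : Finset R) :
    ∑ r, ‖charSum ψ A r‖ ^ 2 = Fintype.card R * #A := by
  have := sum_mul_charSum_neg hψ A id A
  simp only [id, filter_mem_eq_inter, inter_self] at this
  exact_mod_cast (sum_congr rfl fun r _ => (charSum_mul_charSum_neg A r).symm).trans this

lemma sum_charSum_mul_charSum_mul_charSum_neg (hψ : ψ.IsPrimitive) (A B C : Finset R) :
    ∑ r, charSum ψ A r * charSum ψ B r * charSum ψ C (-r) =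
      Fintype.card R * #{x ∈ A ×ˢ B | x.1 + x.2 ∈ C} := by
  simp only [charSum_mul_charSum]
  exact sum_mul_charSum_neg hψ _ _ C

lemma card_pow_three_le_of_sumFree (hψ : ψ.IsPrimitive) {A : Finset R}
    (hA : ∀ a ∈ A, ∀ b ∈ A, a + b ∉ A) {M : ℝ} (hM : ∀ r ≠ 0, ‖charSum ψ A r‖ ≤ M) :
    (#A : ℝ) ^ 3 ≤ M * (Fintype.card R * #A - #A ^ 2) := by
  have hS0 : charSum ψ A 0 = #A := by simp [charSum]
  have hsum := sum_charSum_mul_charSum_mul_charSum_neg hψ A A A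
  have hparseval := sum_norm_charSum_sq hψ A
  rw [filter_eq_empty_iff.mpr fun x hx => hA _ (mem_product.1 hx).1 _ (mem_product.1 hx).2,
    card_empty, Nat.cast_zero, mul_zero, ← add_sum_erase _ _ (mem_univ 0), neg_zero, hS0] at hsum
  rw [← add_sum_erase _ _ (mem_univ 0), hS0, Complex.norm_natCast] at hparseval
  have hrest : ∑ r ∈ univ.erase 0, charSum ψ A r * charSum ψ A r * charSum ψ A (-r) =
      -((#A : ℝ) ^ 3 : ℝ) := by
    push_cast
    linear_combination hsum
  calc (#A : ℝ) ^ 3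
      = ‖∑ r ∈ univ.erase 0, charSum ψ A r * charSum ψ A r * charSum ψ A (-r)‖ := by
        rw [hrest, norm_neg, Complex.norm_real, Real.norm_of_nonneg (by positivity)]
    _ ≤ ∑ r ∈ univ.erase 0, ‖charSum ψ A r‖ ^ 2 * ‖charSum ψ A r‖ := by
        refine (norm_sum_le _ _).trans_eq (sum_congr rfl fun r _ => ?_)
        rw [norm_mul, norm_mul, norm_charSum_neg, sq]
    _ ≤ ∑ r ∈ univ.erase 0, ‖charSum ψ A r‖ ^ 2 * M :=
        sum_le_sum fun r hr => mul_le_mul_of_nonneg_left (hM r (ne_of_mem_erase hr)) (by positivity)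
    _ = M * (Fintype.card R * #A - #A ^ 2) := by
        rw [← sum_mul, mul_comm]; congr 1; linarith

end AddChar

lemma ft_eq_charSum {p : ℕ} [NeZero p] (A : Finset (ZMod p)) (r : ZMod p) :
    ft A r = (p : ℂ)⁻¹ * AddChar.charSum ZMod.stdAddChar A (-r) := by
  rw [ft, AddChar.charSum, sum_ite_mem, univ_inter]
  refine congrArg _ (sum_congr rfl fun x _ => ?_)
  rw [neg_mul, AddChar.map_neg_eq_inv, ZMod.stdAddChar_apply, ZMod.toCircle_apply,
    ← Complex.exp_neg]

theorem stmt3_general {p : ℕ} [Fact p.Prime] (A : Finset (ZMod p))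
    (hsf : ∀ a ∈ A, ∀ b ∈ A, a + b ∉ A)
    (α δ₁ : ℝ) (hα : α = (A.card : ℝ) / p) (hαpos : 0 < α)
    (hub : ∀ r : ZMod p, r ≠ 0 → ‖ft A r‖ ≤ δ₁ * α) :
    α ≤ δ₁ / (1 + δ₁) := by
  have hp : (0 : ℝ) < p := by exact_mod_cast (Fact.out : p.Prime).pos
  have hnorm (r : ZMod p) : ‖ft A (-r)‖ = ‖AddChar.charSum ZMod.stdAddChar A r‖ / p := by
    rw [ft_eq_charSum, neg_neg, norm_mul, norm_inv, Complex.norm_natCast, inv_mul_eq_div]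
  have hδ : 0 ≤ δ₁ := by
    have := (norm_nonneg _).trans (hub 1 one_ne_zero)
    exact nonneg_of_mul_nonneg_left this hαpos
  have hM (r : ZMod p) (hr : r ≠ 0) : ‖AddChar.charSum ZMod.stdAddChar A r‖ ≤ δ₁ * #A := by
    have := hub (-r) (neg_ne_zero.mpr hr)
    rwa [hnorm, hα, div_le_iff₀ hp, mul_assoc, div_mul_cancel₀ _ hp.ne'] at this
  have hcube := AddChar.card_pow_three_le_of_sumFree (ZMod.isPrimitive_stdAddChar p) hsf hM
  rw [ZMod.card] at hcube
  have hA : (0 : ℝ) < #A := by rw [hα] at hαpos; exact (div_pos_iff_of_pos_right hp).1 hαpos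
  have hlin : (#A : ℝ) ≤ δ₁ * (p - #A) := by nlinarith [pow_pos hA 2]
  rw [le_div_iff₀ (by positivity), hα, div_mul_eq_mul_div, div_le_iff₀ hp]
  linarith

theorem stmt3 {p : ℕ} [Fact p.Prime] (A : Finset (ZMod p))
    (hsf : ∀ a ∈ A, ∀ b ∈ A, a + b ∉ A)
    (α δ₁ : ℝ) (hα : α = (A.card : ℝ) / p) (hαpos : 0 < α)
    (hub : ∀ r : ZMod p, r ≠ 0 → ‖ft A r‖ ≤ δ₁ * α)
    (hex : ∃ r : ZMod p, r ≠ 0 ∧ ‖ft A r‖ = δ₁ * α) :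
    α ≤ δ₁ / (1 + δ₁) :=
  stmt3_general A hsf α δ₁ hα hαpos hub
end

section
/- Let A ⊆ F_p be sum-free with density α > 0. Let δ₁α = |Â(r₁)| be the largest nonzero Fourier coefficient magnitude and δ₂α the second largest (over the pairs {r,−r}). If 1 + δ₂ + 2δ₁²δ₂ − 2δ₁³ > 0, then α ≤ δ₂ / (1 + δ₂ + 2δ₁²δ₂ − 2δ₁³). -/
/-!
Sum-freeness makes `∑ r, Â(r)² Â(-r)`, which counts the solutions of `a + b = c` in `A`, vanish;
hence `α³ = |Â(0)|³ ≤ ∑_{r ≠ 0} |Â(r)|³`. The two terms `r = ±r₁` contribute `2 (δ₁α)³`; every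
other term is at most `δ₂α |Â(r)|²`, and by Parseval these `|Â(r)|²` add up to
`α - α² - 2 (δ₁α)²`. Dividing `α³ ≤ 2 (δ₁α)³ + δ₂α (α - α² - 2 (δ₁α)²)` by `α²` gives the bound.
-/

open Finset

open ZMod

section Fourier

variable {p : ℕ} [NeZero p]

lemma sum_stdAddChar_mul (t : ZMod p) :
    ∑ r : ZMod p, stdAddChar (r * t) = if t = 0 then (p : ℂ) else 0 := by
  classical
  simpa using AddChar.sum_mulShift t (isPrimitive_stdAddChar p)

lemma ft_eq_sum_stdAddChar (A : Finset (ZMod p)) (r : ZMod p) :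
    ft A r = (p : ℂ)⁻¹ * ∑ x ∈ A, stdAddChar (-(r * x)) := by
  rw [ft, sum_ite_mem, univ_inter]
  congr 1
  refine sum_congr rfl fun x _ => ?_
  rw [AddChar.map_neg_eq_inv, stdAddChar_apply, toCircle_apply, Complex.exp_neg]

lemma ft_neg (A : Finset (ZMod p)) (r : ZMod p) : ft A (-r) = starRingEnd ℂ (ft A r) := by
  simp only [ft_eq_sum_stdAddChar, map_mul, map_sum, map_inv₀, map_natCast, neg_mul,
    ← AddChar.map_neg_eq_conj]

lemma norm_ft_neg (A : Finset (ZMod p)) (r : ZMod p) : ‖ft A (-r)‖ = ‖ft A r‖ := by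
  rw [ft_neg, Complex.norm_conj]

lemma norm_ft_zero (A : Finset (ZMod p)) : ‖ft A 0‖ = (#A : ℝ) / p := by
  simp [ft_eq_sum_stdAddChar, div_eq_inv_mul]

lemma sum_norm_ft_sq (A : Finset (ZMod p)) : ∑ r, ‖ft A r‖ ^ 2 = (#A : ℝ) / p := by
  have hp : (p : ℂ) ≠ 0 := NeZero.ne _
  suffices ∑ r, ft A r * ft A (-r) = (#A : ℂ) / p by
    simp_rw [ft_neg, Complex.mul_conj'] at this
    rw [← Complex.ofReal_inj]
    push_cast
    exact this
  calc ∑ r, ft A r * ft A (-r)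
      = (p : ℂ)⁻¹ ^ 2 * ∑ a ∈ A, ∑ b ∈ A, ∑ r, stdAddChar (r * (a - b)) := by
        simp only [ft_eq_sum_stdAddChar, mul_sum, sum_mul]
        rw [sum_comm]
        refine sum_congr rfl fun a _ => ?_
        rw [sum_comm]
        refine sum_congr rfl fun b _ => sum_congr rfl fun r _ => ?_
        rw [mul_sub, AddChar.map_sub_eq_div, neg_mul, neg_neg, AddChar.map_neg_eq_inv]
        ring
    _ = (#A : ℂ) / p := by
        simp only [sum_stdAddChar_mul, sub_eq_zero, sum_ite_eq, sum_ite_mem, inter_self, sum_const,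
          nsmul_eq_mul]
        field_simp

lemma sum_ft_sq_mul_ft_neg_eq_zero {A : Finset (ZMod p)} (hA : ∀ a ∈ A, ∀ b ∈ A, a + b ∉ A) :
    ∑ r, ft A r ^ 2 * ft A (-r) = 0 := by
  calc ∑ r, ft A r ^ 2 * ft A (-r)
      = (p : ℂ)⁻¹ ^ 3 * ∑ a ∈ A, ∑ b ∈ A, ∑ c ∈ A, ∑ r, stdAddChar (r * (a - b - c)) := by
        simp only [ft_eq_sum_stdAddChar, sq, mul_sum, sum_mul]
        rw [sum_comm]
        refine sum_congr rfl fun a _ => ?_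
        rw [sum_comm]
        refine sum_congr rfl fun b _ => ?_
        rw [sum_comm]
        refine sum_congr rfl fun c _ => sum_congr rfl fun r _ => ?_
        rw [mul_sub, mul_sub, AddChar.map_sub_eq_div, AddChar.map_sub_eq_div, neg_mul, neg_neg,
          AddChar.map_neg_eq_inv, AddChar.map_neg_eq_inv]
        ring
    _ = 0 := by
        refine mul_eq_zero_of_right _ <| sum_eq_zero fun a ha => sum_eq_zero fun b hb =>
          sum_eq_zero fun c hc => ?_
        rw [sum_stdAddChar_mul, if_neg]
        rw [sub_sub, sub_eq_zero]
        rintro rfl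
        exact hA b hb c hc ha

lemma norm_ft_zero_pow_three_le {A : Finset (ZMod p)} (hA : ∀ a ∈ A, ∀ b ∈ A, a + b ∉ A) :
    ‖ft A 0‖ ^ 3 ≤ ∑ r ∈ univ.erase 0, ‖ft A r‖ ^ 3 := by
  have h := sum_ft_sq_mul_ft_neg_eq_zero hA
  rw [← add_sum_erase _ _ (mem_univ 0), add_eq_zero_iff_eq_neg, neg_zero] at h
  calc ‖ft A 0‖ ^ 3 = ‖ft A 0 ^ 2 * ft A 0‖ := by rw [norm_mul, norm_pow]; ring
    _ = ‖∑ r ∈ univ.erase 0, ft A r ^ 2 * ft A (-r)‖ := by rw [h, norm_neg]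
    _ ≤ ∑ r ∈ univ.erase 0, ‖ft A r‖ ^ 3 := by
        refine (norm_sum_le _ _).trans_eq (sum_congr rfl fun r _ => ?_)
        rw [norm_mul, norm_pow, norm_ft_neg]; ring

end Fourier

lemma sum_pow_three_le_of_le_on_sdiff {ι : Type*} [DecidableEq ι] {s t : Finset ι} {f : ι → ℝ}
    {M : ℝ} (hts : t ⊆ s) (hM : ∀ i ∈ s \ t, f i ≤ M) :
    ∑ i ∈ s, f i ^ 3 ≤ ∑ i ∈ t, f i ^ 3 + M * ∑ i ∈ s \ t, f i ^ 2 := by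
  rw [← sum_sdiff hts, add_comm, mul_sum]
  gcongr with i hi
  calc f i ^ 3 = f i * f i ^ 2 := by ring
    _ ≤ M * f i ^ 2 := by gcongr; exact hM i hi

theorem stmt4_general {p : ℕ} [Fact p.Prime] (hodd : Odd p) (A : Finset (ZMod p))
    (hsf : ∀ a ∈ A, ∀ b ∈ A, a + b ∉ A)
    (α δ₁ δ₂ : ℝ) (hα : α = (A.card : ℝ) / p) (hαpos : 0 < α)
    (r₁ : ZMod p) (hr₁ : r₁ ≠ 0)
    (h1 : ‖ft A r₁‖ = δ₁ * α)
    (hub2 : ∀ r : ZMod p, r ≠ 0 → r ≠ r₁ → r ≠ -r₁ → ‖ft A r‖ ≤ δ₂ * α)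
    (hpos : 0 < 1 + δ₂ + 2 * δ₁ ^ 2 * δ₂ - 2 * δ₁ ^ 3) :
    α ≤ δ₂ / (1 + δ₂ + 2 * δ₁ ^ 2 * δ₂ - 2 * δ₁ ^ 3) := by
  classical
  set f : ZMod p → ℝ := fun r => ‖ft A r‖
  set t : Finset (ZMod p) := {r₁, -r₁}
  have hne : r₁ ≠ -r₁ := ZMod.ne_neg_self hodd hr₁
  have ht : t ⊆ univ.erase 0 := by simp [t, subset_iff, hr₁]
  have hf0 : f 0 = α := by simp [f, norm_ft_zero, hα]
  have hft : ∀ n : ℕ, ∑ r ∈ t, f r ^ n = 2 * (δ₁ * α) ^ n := by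
    intro n
    simp only [t, f, sum_pair hne, norm_ft_neg, h1]
    ring
  have hsq : ∑ r ∈ univ.erase 0 \ t, f r ^ 2 = α - α ^ 2 - 2 * (δ₁ * α) ^ 2 := by
    rw [sum_sdiff_eq_sub ht, sum_erase_eq_sub (mem_univ 0), sum_norm_ft_sq, hft, hf0, ← hα]
  have hcube : α ^ 3 ≤ 2 * (δ₁ * α) ^ 3 + δ₂ * α * (α - α ^ 2 - 2 * (δ₁ * α) ^ 2) := by
    calc α ^ 3 = f 0 ^ 3 := by rw [hf0]
      _ ≤ ∑ r ∈ univ.erase 0, f r ^ 3 := norm_ft_zero_pow_three_le hsf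
      _ ≤ ∑ r ∈ t, f r ^ 3 + δ₂ * α * ∑ r ∈ univ.erase 0 \ t, f r ^ 2 :=
          sum_pow_three_le_of_le_on_sdiff ht fun r hr => by
            simp only [t, mem_sdiff, mem_erase, mem_insert, mem_singleton, not_or] at hr
            exact hub2 r hr.1.1 hr.2.1 hr.2.2
      _ = _ := by rw [hft, hsq]
  have hfactored : α ^ 2 * (α * (1 + δ₂ + 2 * δ₁ ^ 2 * δ₂ - 2 * δ₁ ^ 3) - δ₂) ≤ 0 := by
    linear_combination hcube
  rw [le_div_iff₀ hpos, ← sub_nonpos]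
  exact nonpos_of_mul_nonpos_right hfactored (pow_pos hαpos 2)

theorem stmt4 {p : ℕ} [Fact p.Prime] (hodd : Odd p) (A : Finset (ZMod p))
    (hsf : ∀ a ∈ A, ∀ b ∈ A, a + b ∉ A)
    (α δ₁ δ₂ : ℝ) (hα : α = (A.card : ℝ) / p) (hαpos : 0 < α)
    (r₁ : ZMod p) (hr₁ : r₁ ≠ 0)
    (h1 : ‖ft A r₁‖ = δ₁ * α)
    (hub1 : ∀ r : ZMod p, r ≠ 0 → ‖ft A r‖ ≤ δ₁ * α)
    (hub2 : ∀ r : ZMod p, r ≠ 0 → r ≠ r₁ → r ≠ -r₁ → ‖ft A r‖ ≤ δ₂ * α)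
    (hex2 : ∃ r : ZMod p, r ≠ 0 ∧ r ≠ r₁ ∧ r ≠ -r₁ ∧ ‖ft A r‖ = δ₂ * α)
    (hpos : 0 < 1 + δ₂ + 2 * δ₁ ^ 2 * δ₂ - 2 * δ₁ ^ 3) :
    α ≤ δ₂ / (1 + δ₂ + 2 * δ₁ ^ 2 * δ₂ - 2 * δ₁ ^ 3) :=
  stmt4_general hodd A hsf α δ₁ δ₂ hα hαpos r₁ hr₁ h1 hub2 hpos
end
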